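/- Let s, t ∈ ℝ with s ≥ t ≥ 0 and s > n/2. Then for all u, v : ℤⁿ → ℂ with ‖u‖_{H^s} := (∑_k (1+|k|²)^s|u(k)|²)^{1/2} < ∞ and ‖v‖_{H^t} < ∞, the convolution (u * v)(k) = ∑_{l∈ℤⁿ} u(l) v(k−l) is well defined and satisfies ‖u * v‖_{H^t} ≤ C · ‖u‖_{H^s} · ‖v‖_{H^t} for a constant C depending only on n, s, t. -/

import Mathlib

/-!
Write `w k = 1 + |k|²`. Since `w k ≤ 2 (w l + w (k - l))` and `0 ≤ t ≤ s`, comparing `w l` with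
`w (k - l)` gives `w k ^ (t/2) ≤ 2^t (w l ^ (s/2) w (k-l) ^ ((t-s)/2) + w (k-l) ^ (t/2))`. Hence
`w^(t/2) |u * v| ≤ 2^t (a * (w^(-s/2) b) + (w^(-s/2) a) * b)` with `a = w^(s/2) |u|` and
`b = w^(t/2) |v|` in `ℓ²`. By Cauchy–Schwarz, `w^(-s/2) a` and `w^(-s/2) b` lie in `ℓ¹` with norms
at most `H^(1/2) ‖a‖₂` and `H^(1/2) ‖b‖₂`, where `H = ∑ w^(-s)` is finite because `s > n/2`; Young's
inequality `‖c * g‖₂ ≤ ‖c‖₁ ‖g‖₂` concludes. All estimates are made in `ℝ≥0∞`, where every series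
has a sum, and the convergence statements are read off at the end from the finiteness of the bound.
-/

open scoped ENNReal
open ENNReal (ofReal)

namespace ENNReal

lemma two_mul_le_add_sq (x y : ℝ≥0∞) : 2 * x * y ≤ x ^ 2 + y ^ 2 := by
  rcases eq_or_ne x ⊤ with rfl | hx
  · simp
  rcases eq_or_ne y ⊤ with rfl | hy
  · simp
  lift x to NNReal using hx
  lift y to NNReal using hy
  exact_mod_cast _root_.two_mul_le_add_sq x y

lemma add_sq_le (x y : ℝ≥0∞) : (x + y) ^ 2 ≤ 2 * (x ^ 2 + y ^ 2) :=
  calc (x + y) ^ 2 = x ^ 2 + y ^ 2 + 2 * x * y := by ring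
    _ ≤ x ^ 2 + y ^ 2 + (x ^ 2 + y ^ 2) := by gcongr; exact two_mul_le_add_sq x y
    _ = 2 * (x ^ 2 + y ^ 2) := by ring

theorem tsum_mul_sq_le {ι : Type*} (f g : ι → ℝ≥0∞) :
    (∑' i, f i * g i) ^ 2 ≤ (∑' i, f i ^ 2) * ∑' i, g i ^ 2 := by
  suffices 2 * (∑' i, f i * g i) ^ 2 ≤ 2 * ((∑' i, f i ^ 2) * ∑' i, g i ^ 2) from
    (ENNReal.mul_le_mul_iff_right two_ne_zero ofNat_ne_top).mp this
  calc 2 * (∑' i, f i * g i) ^ 2 = ∑' i, ∑' j, 2 * (f i * g j) * (f j * g i) := by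
        simp only [sq, ← ENNReal.tsum_mul_left, ← ENNReal.tsum_mul_right]
        exact tsum_congr fun i => tsum_congr fun j => by ring
    _ ≤ ∑' i, ∑' j, ((f i * g j) ^ 2 + (f j * g i) ^ 2) := by
        gcongr with i j
        exact two_mul_le_add_sq _ _
    _ = 2 * ((∑' i, f i ^ 2) * ∑' i, g i ^ 2) := by
        simp only [ENNReal.tsum_add, mul_pow, ENNReal.tsum_mul_left, ENNReal.tsum_mul_right]
        ring

end ENNReal

lemma summable_and_tsum_le_of_tsum_ofReal_le {ι : Type*} {f : ι → ℝ} (hf : ∀ i, 0 ≤ f i)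
    {M : ℝ} (hM : 0 ≤ M) (h : ∑' i, ofReal (f i) ≤ ofReal M) :
    Summable f ∧ ∑' i, f i ≤ M := by
  have hsum : Summable f :=
    (ENNReal.summable_toReal (ne_top_of_le_ne_top ENNReal.ofReal_ne_top h)).congr
      fun i => ENNReal.toReal_ofReal (hf i)
  refine ⟨hsum, ?_⟩
  rwa [← ENNReal.ofReal_le_ofReal_iff hM, ENNReal.ofReal_tsum_of_nonneg hf hsum]

lemma max_rpow_le_rpow_mul_add_rpow {Q R s t : ℝ} (hQ : 0 < Q) (hR : 0 < R) (hts : t ≤ s) :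
    max Q R ^ t ≤ Q ^ s * (R ^ (-s) * R ^ t) + R ^ t := by
  rcases le_total R Q with hRQ | hQR
  · rw [max_eq_left hRQ]
    calc Q ^ t = Q ^ s * Q ^ (-s + t) := by rw [← Real.rpow_add hQ]; ring_nf
      _ ≤ Q ^ s * R ^ (-s + t) := by
          have := Real.rpow_le_rpow_of_nonpos hR hRQ (by linarith : -s + t ≤ 0)
          gcongr
      _ = Q ^ s * (R ^ (-s) * R ^ t) := by rw [Real.rpow_add hR]
      _ ≤ _ := le_add_of_nonneg_right (by positivity)
  · rw [max_eq_right hQR]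
    exact le_add_of_nonneg_left (by positivity)

lemma rpow_half_le_of_le_two_mul_add {P Q R s t : ℝ} (hP : 0 ≤ P) (hQ : 0 < Q) (hR : 0 < R)
    (hPQR : P ≤ 2 * (Q + R)) (ht : 0 ≤ t) (hts : t ≤ s) :
    P ^ (t / 2) ≤ 2 ^ t * (Q ^ (s / 2) * (R ^ (-s / 2) * R ^ (t / 2)) + R ^ (t / 2)) :=
  calc P ^ (t / 2) ≤ (4 * max Q R) ^ (t / 2) := by
        gcongr
        linarith [le_max_left Q R, le_max_right Q R]
    _ = 2 ^ t * max Q R ^ (t / 2) := by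
        rw [Real.mul_rpow (by norm_num) (by positivity), show (4 : ℝ) = 2 ^ (2 : ℝ) by norm_num,
          ← Real.rpow_mul (by norm_num)]
        ring_nf
    _ ≤ _ := by
        gcongr
        simpa only [neg_div] using
          max_rpow_le_rpow_mul_add_rpow hQ hR (by linarith : t / 2 ≤ s / 2)

lemma ofReal_rpow_half_sq {x : ℝ} (hx : 0 ≤ x) (r : ℝ) :
    ofReal (x ^ (r / 2)) ^ 2 = ofReal (x ^ r) := by
  rw [← ENNReal.ofReal_pow (by positivity), ← Real.rpow_natCast, ← Real.rpow_mul hx]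
  norm_num

lemma ofReal_rpow_neg_half_mul_ofReal_rpow_half {x : ℝ} (hx : 0 < x) (r : ℝ) :
    ofReal (x ^ (-r / 2)) * ofReal (x ^ (r / 2)) = 1 := by
  rw [← ENNReal.ofReal_mul (by positivity), ← Real.rpow_add hx, neg_div, neg_add_cancel,
    Real.rpow_zero, ENNReal.ofReal_one]

lemma ofReal_two_rpow_sq_mul_four (t : ℝ) : ofReal (2 ^ t) ^ 2 * 2 * 2 = ofReal (4 ^ (t + 1)) := by
  have h : (4 : ℝ) ^ (t + 1) = ((2 : ℝ) ^ t) ^ 2 * 2 * 2 := by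
    rw [Real.rpow_add_one (by norm_num), ← Real.rpow_natCast, ← Real.rpow_mul (by norm_num),
      show (4 : ℝ) = 2 ^ (2 : ℝ) by norm_num, ← Real.rpow_mul (by norm_num)]
    ring_nf
  rw [h, ENNReal.ofReal_mul (by positivity), ENNReal.ofReal_mul (by positivity),
    ENNReal.ofReal_pow (by positivity), ENNReal.ofReal_ofNat]

-- The right-hand side is what `weighted_discreteConv_le` becomes after unfolding `weighted`.
lemma ofReal_rpow_half_mul_le {P Q R s t : ℝ} (hP : 0 ≤ P) (hQ : 0 < Q) (hR : 0 < R)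
    (hPQR : P ≤ 2 * (Q + R)) (ht : 0 ≤ t) (hts : t ≤ s) (x y : ℝ≥0∞) :
    ofReal (P ^ (t / 2)) * (x * y) ≤ ofReal (2 ^ t) *
      (ofReal (Q ^ (s / 2)) * x * (ofReal (R ^ (-s / 2)) * (ofReal (R ^ (t / 2)) * y)) +
        ofReal (Q ^ (-s / 2)) * (ofReal (Q ^ (s / 2)) * x) * (ofReal (R ^ (t / 2)) * y)) := by
  have key := ENNReal.ofReal_le_ofReal (rpow_half_le_of_le_two_mul_add hP hQ hR hPQR ht hts)
  rw [ENNReal.ofReal_mul (by positivity), ENNReal.ofReal_add (by positivity) (by positivity),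
    ENNReal.ofReal_mul (by positivity), ENNReal.ofReal_mul (by positivity)] at key
  calc ofReal (P ^ (t / 2)) * (x * y)
      ≤ ofReal (2 ^ t) * (ofReal (Q ^ (s / 2)) * (ofReal (R ^ (-s / 2)) * ofReal (R ^ (t / 2))) +
          ofReal (R ^ (t / 2))) * (x * y) := by gcongr
    _ = ofReal (2 ^ t) * (ofReal (Q ^ (s / 2)) * (ofReal (R ^ (-s / 2)) * ofReal (R ^ (t / 2))) +
          ofReal (Q ^ (-s / 2)) * ofReal (Q ^ (s / 2)) * ofReal (R ^ (t / 2))) * (x * y) := by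
        rw [ofReal_rpow_neg_half_mul_ofReal_rpow_half hQ, one_mul]
    _ = _ := by ring

variable {G : Type*}

noncomputable def discreteConv [Sub G] (f g : G → ℝ≥0∞) (k : G) : ℝ≥0∞ :=
  ∑' l, f l * g (k - l)

noncomputable def weighted (w : G → ℝ) (r : ℝ) (f : G → ℝ≥0∞) (k : G) : ℝ≥0∞ :=
  ofReal (w k ^ r) * f k

lemma discreteConv_comm [AddCommGroup G] (f g : G → ℝ≥0∞) :
    discreteConv f g = discreteConv g f := by
  ext k
  rw [discreteConv, ← (Equiv.subLeft k).tsum_eq]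
  simp [discreteConv, mul_comm]

theorem tsum_discreteConv_sq_le [AddGroup G] (c g : G → ℝ≥0∞) :
    ∑' k, discreteConv c g k ^ 2 ≤ (∑' l, c l) ^ 2 * ∑' k, g k ^ 2 := by
  have shift (l : G) : ∑' k, g (k - l) ^ 2 = ∑' k, g k ^ 2 :=
    (Equiv.subRight l).tsum_eq (fun k => g k ^ 2)
  have cross (l m : G) : ∑' k, g (k - l) * g (k - m) ≤ ∑' k, g k ^ 2 := by
    rw [← ENNReal.pow_le_pow_left_iff two_ne_zero, sq (∑' k, g k ^ 2)]
    simpa only [shift] using ENNReal.tsum_mul_sq_le (fun k => g (k - l)) (fun k => g (k - m))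
  calc ∑' k, discreteConv c g k ^ 2
      = ∑' k, ∑' l, ∑' m, c l * c m * (g (k - l) * g (k - m)) := by
        simp only [discreteConv, sq, ← ENNReal.tsum_mul_left, ← ENNReal.tsum_mul_right]
        exact tsum_congr fun k => tsum_congr fun l => tsum_congr fun m => by ring
    _ = ∑' l, ∑' m, c l * c m * ∑' k, g (k - l) * g (k - m) := by
        rw [ENNReal.tsum_comm]
        refine tsum_congr fun l => ?_
        rw [ENNReal.tsum_comm]
        exact tsum_congr fun m => ENNReal.tsum_mul_left
    _ ≤ ∑' l, ∑' m, c l * c m * ∑' k, g k ^ 2 :=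
        ENNReal.tsum_le_tsum fun l => ENNReal.tsum_le_tsum fun m => mul_le_mul_right (cross l m) _
    _ = (∑' l, c l) ^ 2 * ∑' k, g k ^ 2 := by
        simp only [ENNReal.tsum_mul_right, ENNReal.tsum_mul_left]
        ring

section WeightedConvolution

variable {w : G → ℝ} {s t : ℝ}

lemma weighted_half_sq (hw0 : ∀ k, 0 < w k) (r : ℝ) (f : G → ℝ≥0∞) (k : G) :
    weighted w (r / 2) f k ^ 2 = ofReal (w k ^ r) * f k ^ 2 := by
  rw [weighted, mul_pow, ofReal_rpow_half_sq (hw0 k).le]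

lemma sq_tsum_weighted_le (hw0 : ∀ k, 0 < w k) (r : ℝ) (f : G → ℝ≥0∞) :
    (∑' k, weighted w (-r / 2) f k) ^ 2 ≤ (∑' k, ofReal (w k ^ (-r))) * ∑' k, f k ^ 2 := by
  simpa only [weighted, ofReal_rpow_half_sq (hw0 _).le] using
    ENNReal.tsum_mul_sq_le (fun k => ofReal (w k ^ (-r / 2))) f

lemma tsum_discreteConv_weighted_sq_le [AddGroup G] (hw0 : ∀ k, 0 < w k) (r : ℝ)
    (c g : G → ℝ≥0∞) :
    ∑' k, discreteConv (weighted w (-r / 2) c) g k ^ 2 ≤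
      (∑' k, ofReal (w k ^ (-r))) * (∑' k, c k ^ 2) * ∑' k, g k ^ 2 :=
  (tsum_discreteConv_sq_le _ g).trans (mul_le_mul_left (sq_tsum_weighted_le hw0 r c) _)

lemma ofReal_tsum_rpow_mul_norm_sq {E : Type*} [NormedAddCommGroup E] (hw0 : ∀ k, 0 < w k)
    (r : ℝ) {x : G → E} (hx : Summable fun k => w k ^ r * ‖x k‖ ^ 2) :
    ofReal (∑' k, w k ^ r * ‖x k‖ ^ 2) = ∑' k, ofReal (w k ^ r) * ‖x k‖ₑ ^ 2 := by
  have hwr (k : G) : 0 ≤ w k ^ r := Real.rpow_nonneg (hw0 k).le r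
  rw [ENNReal.ofReal_tsum_of_nonneg (fun k => mul_nonneg (hwr k) (sq_nonneg _)) hx]
  refine tsum_congr fun k => ?_
  rw [ENNReal.ofReal_mul (hwr k), ENNReal.ofReal_pow (norm_nonneg _), ofReal_norm]

variable [AddCommGroup G]

lemma weighted_discreteConv_le (hw0 : ∀ k, 0 < w k) (hw : ∀ a b, w (a + b) ≤ 2 * (w a + w b))
    (ht : 0 ≤ t) (hts : t ≤ s) (f g : G → ℝ≥0∞) (k : G) :
    weighted w (t / 2) (discreteConv f g) k ≤ ofReal (2 ^ t) *
      (discreteConv (weighted w (-s / 2) (weighted w (t / 2) g)) (weighted w (s / 2) f) k +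
        discreteConv (weighted w (-s / 2) (weighted w (s / 2) f)) (weighted w (t / 2) g) k) := by
  rw [discreteConv_comm (weighted w (-s / 2) _)]
  simp only [weighted, discreteConv]
  rw [← ENNReal.tsum_add, ← ENNReal.tsum_mul_left, ← ENNReal.tsum_mul_left]
  refine ENNReal.tsum_le_tsum fun l => ?_
  have hk : w k ≤ 2 * (w l + w (k - l)) := by simpa using hw l (k - l)
  exact ofReal_rpow_half_mul_le (hw0 k).le (hw0 l) (hw0 (k - l)) hk ht hts (f l) (g (k - l))

theorem tsum_ofReal_rpow_mul_discreteConv_sq_le (hw0 : ∀ k, 0 < w k)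
    (hw : ∀ a b, w (a + b) ≤ 2 * (w a + w b)) (ht : 0 ≤ t) (hts : t ≤ s) (f g : G → ℝ≥0∞) :
    ∑' k, ofReal (w k ^ t) * discreteConv f g k ^ 2 ≤ ofReal (4 ^ (t + 1)) *
      (∑' k, ofReal (w k ^ (-s))) * (∑' k, ofReal (w k ^ s) * f k ^ 2) *
        ∑' k, ofReal (w k ^ t) * g k ^ 2 := by
  set H := ∑' k, ofReal (w k ^ (-s))
  set A := weighted w (s / 2) f
  set B := weighted w (t / 2) g
  set X := discreteConv (weighted w (-s / 2) B) A
  set Y := discreteConv (weighted w (-s / 2) A) B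
  have hA : ∑' k, A k ^ 2 = ∑' k, ofReal (w k ^ s) * f k ^ 2 :=
    tsum_congr (weighted_half_sq hw0 s f)
  have hB : ∑' k, B k ^ 2 = ∑' k, ofReal (w k ^ t) * g k ^ 2 :=
    tsum_congr (weighted_half_sq hw0 t g)
  calc ∑' k, ofReal (w k ^ t) * discreteConv f g k ^ 2
      = ∑' k, weighted w (t / 2) (discreteConv f g) k ^ 2 :=
        (tsum_congr (weighted_half_sq hw0 t _)).symm
    _ ≤ ∑' k, (ofReal (2 ^ t) * (X k + Y k)) ^ 2 := by
        gcongr with k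
        exact weighted_discreteConv_le hw0 hw ht hts f g k
    _ ≤ ∑' k, ofReal (2 ^ t) ^ 2 * (2 * (X k ^ 2 + Y k ^ 2)) := by
        gcongr with k
        rw [mul_pow]
        gcongr
        exact ENNReal.add_sq_le _ _
    _ = ofReal (2 ^ t) ^ 2 * 2 * (∑' k, X k ^ 2 + ∑' k, Y k ^ 2) := by
        simp only [← ENNReal.tsum_add, ← ENNReal.tsum_mul_left]
        exact tsum_congr fun k => by ring
    _ ≤ ofReal (2 ^ t) ^ 2 * 2 * (H * (∑' k, B k ^ 2) * ∑' k, A k ^ 2 +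
          H * (∑' k, A k ^ 2) * ∑' k, B k ^ 2) := by
        gcongr
        · exact tsum_discreteConv_weighted_sq_le hw0 s B A
        · exact tsum_discreteConv_weighted_sq_le hw0 s A B
    _ = _ := by
        rw [hA, hB, ← ofReal_two_rpow_sq_mul_four]
        ring

theorem weightedL2_conv_bound (hw0 : ∀ k, 0 < w k)
    (hw : ∀ a b, w (a + b) ≤ 2 * (w a + w b)) (hH : Summable fun k => w k ^ (-s))
    (ht : 0 ≤ t) (hts : t ≤ s) {u v : G → ℂ}
    (hu : Summable fun k => w k ^ s * ‖u k‖ ^ 2) (hv : Summable fun k => w k ^ t * ‖v k‖ ^ 2) :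
    (∀ k, Summable fun l => ‖u l * v (k - l)‖) ∧
      Summable (fun k => w k ^ t * ‖∑' l, u l * v (k - l)‖ ^ 2) ∧
      √(∑' k, w k ^ t * ‖∑' l, u l * v (k - l)‖ ^ 2) ≤
        √(4 ^ (t + 1) * ∑' k, w k ^ (-s)) * √(∑' k, w k ^ s * ‖u k‖ ^ 2) *
          √(∑' k, w k ^ t * ‖v k‖ ^ 2) := by
  have hwr (r : ℝ) (k : G) : 0 ≤ w k ^ r := Real.rpow_nonneg (hw0 k).le r
  have hterm (r : ℝ) (x : G → ℂ) (k : G) : 0 ≤ w k ^ r * ‖x k‖ ^ 2 :=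
    mul_nonneg (hwr r k) (sq_nonneg _)
  set H := ∑' k, w k ^ (-s)
  set A := ∑' k, w k ^ s * ‖u k‖ ^ 2
  set B := ∑' k, w k ^ t * ‖v k‖ ^ 2
  have hH0 : 0 ≤ H := tsum_nonneg (hwr (-s))
  have hA0 : 0 ≤ A := tsum_nonneg (hterm s u)
  have hB0 : 0 ≤ B := tsum_nonneg (hterm t v)
  set F := discreteConv (fun l => ‖u l‖ₑ) (fun l => ‖v l‖ₑ)
  have hF : ∑' k, ofReal (w k ^ t) * F k ^ 2 ≤ ofReal (4 ^ (t + 1) * H * A * B) := by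
    rw [ENNReal.ofReal_mul (by positivity), ENNReal.ofReal_mul (by positivity),
      ENNReal.ofReal_mul (by positivity), ofReal_tsum_rpow_mul_norm_sq hw0 s hu,
      ofReal_tsum_rpow_mul_norm_sq hw0 t hv, ENNReal.ofReal_tsum_of_nonneg (hwr (-s)) hH]
    exact tsum_ofReal_rpow_mul_discreteConv_sq_le hw0 hw ht hts _ _
  have hF_ne_top (k : G) : F k ≠ ⊤ := by
    have := ENNReal.ne_top_of_tsum_ne_top (ne_top_of_le_ne_top ENNReal.ofReal_ne_top hF) k
    have hk : ofReal (w k ^ t) ≠ 0 :=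
      (ENNReal.ofReal_pos.mpr (Real.rpow_pos_of_pos (hw0 k) t)).ne'
    simpa [ENNReal.mul_eq_top, hk] using this
  have hconv (k : G) : Summable fun l => ‖u l * v (k - l)‖ :=
    tsum_enorm_ne_top_iff_summable_norm.mp <| by
      simpa [F, discreteConv, enorm_mul] using hF_ne_top k
  have hpointwise (k : G) :
      ofReal (w k ^ t * ‖∑' l, u l * v (k - l)‖ ^ 2) ≤ ofReal (w k ^ t) * F k ^ 2 := by
    rw [ENNReal.ofReal_mul (hwr t k), ENNReal.ofReal_pow (norm_nonneg _), ofReal_norm]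
    gcongr
    exact enorm_tsum_le_tsum_enorm.trans_eq (by simp only [F, discreteConv, enorm_mul])
  obtain ⟨hsum, hle⟩ := summable_and_tsum_le_of_tsum_ofReal_le
    (fun k => hterm t (fun k => ∑' l, u l * v (k - l)) k) (by positivity)
    ((ENNReal.tsum_le_tsum hpointwise).trans hF)
  refine ⟨hconv, hsum, ?_⟩
  rw [← Real.sqrt_mul (by positivity), ← Real.sqrt_mul (by positivity)]
  exact Real.sqrt_le_sqrt hle

end WeightedConvolution

lemma summable_one_add_sq_rpow_neg {r : ℝ} (hr : 1 / 2 < r) :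
    Summable fun m : ℤ => (1 + (m : ℝ) ^ 2) ^ (-r) := by
  refine (Real.summable_abs_int_rpow (b := 2 * r) (by linarith)).of_norm_bounded_eventually ?_
  filter_upwards [Filter.eventually_cofinite_ne 0] with m hm
  have hm2 : 0 < (m : ℝ) ^ 2 := sq_pos_of_ne_zero (Int.cast_ne_zero.mpr hm)
  rw [Real.norm_of_nonneg (by positivity)]
  calc (1 + (m : ℝ) ^ 2) ^ (-r) ≤ ((m : ℝ) ^ 2) ^ (-r) :=
        Real.rpow_le_rpow_of_nonpos hm2 (by linarith) (by linarith)
    _ = |(m : ℝ)| ^ (-(2 * r)) := by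
        rw [← sq_abs, ← Real.rpow_natCast, ← Real.rpow_mul (abs_nonneg _)]
        ring_nf

lemma summable_prod_apply_of_nonneg {α : Type*} {g : α → ℝ} (hg0 : ∀ a, 0 ≤ g a)
    (hg : Summable g) : ∀ n : ℕ, Summable fun x : Fin n → α => ∏ j, g (x j)
  | 0 => .of_finite
  | n + 1 => by
    have hprod := hg.mul_of_nonneg (summable_prod_apply_of_nonneg hg0 hg n) hg0
      fun x => Finset.prod_nonneg fun j _ => hg0 (x j)
    refine ((Fin.consEquiv fun _ => α).symm.summable_iff.mpr hprod).congr fun x => ?_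
    simp [Fin.prod_univ_succ, Fin.tail]

noncomputable def sobolevWeight {n : ℕ} (k : Fin n → ℤ) : ℝ := 1 + ∑ j, (k j : ℝ) ^ 2

lemma sobolevWeight_pos {n : ℕ} (k : Fin n → ℤ) : 0 < sobolevWeight k := by
  unfold sobolevWeight
  positivity

lemma one_add_sq_le_sobolevWeight {n : ℕ} (k : Fin n → ℤ) (j : Fin n) :
    1 + (k j : ℝ) ^ 2 ≤ sobolevWeight k := by
  unfold sobolevWeight
  gcongr
  exact Finset.single_le_sum (fun i _ => sq_nonneg (k i : ℝ)) (Finset.mem_univ j)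

lemma sobolevWeight_add_le {n : ℕ} (a b : Fin n → ℤ) :
    sobolevWeight (a + b) ≤ 2 * (sobolevWeight a + sobolevWeight b) := by
  have h := Finset.sum_le_sum fun j (_ : j ∈ Finset.univ) =>
    add_sq_le (a := (a j : ℝ)) (b := (b j : ℝ))
  rw [← Finset.mul_sum, Finset.sum_add_distrib] at h
  unfold sobolevWeight
  push_cast [Pi.add_apply]
  linarith

lemma summable_sobolevWeight_rpow_neg {n : ℕ} {s : ℝ} (hs : (n : ℝ) / 2 < s) :
    Summable fun k : Fin n → ℤ => sobolevWeight k ^ (-s) := by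
  rcases Nat.eq_zero_or_pos n with rfl | hn
  · exact .of_finite
  have hn' : (0 : ℝ) < n := by exact_mod_cast hn
  have hr : 1 / 2 < s / n := by rw [lt_div_iff₀ hn']; linarith
  refine (summable_prod_apply_of_nonneg (fun m => by positivity)
    (summable_one_add_sq_rpow_neg hr) n).of_nonneg_of_le
    (fun k => (Real.rpow_pos_of_pos (sobolevWeight_pos k) _).le) fun k => ?_
  calc sobolevWeight k ^ (-s) = ∏ _j : Fin n, sobolevWeight k ^ (-(s / n)) := by
        rw [Finset.prod_const, Finset.card_univ, Fintype.card_fin, ← Real.rpow_natCast,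
          ← Real.rpow_mul (sobolevWeight_pos k).le]
        field_simp
    _ ≤ ∏ j, (1 + (k j : ℝ) ^ 2) ^ (-(s / n)) :=
        Finset.prod_le_prod (fun j _ => (Real.rpow_pos_of_pos (sobolevWeight_pos k) _).le)
          fun j _ => Real.rpow_le_rpow_of_nonpos (by positivity)
            (one_add_sq_le_sobolevWeight k j) (by linarith)

theorem stmt13 (n : ℕ) (s t : ℝ) (hts : t ≤ s) (ht : 0 ≤ t) (hs : (n : ℝ) / 2 < s) :
    ∃ C : ℝ, 0 < C ∧ ∀ u v : (Fin n → ℤ) → ℂ,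
      Summable (fun k : Fin n → ℤ => (1 + ∑ j, ((k j : ℝ)) ^ 2) ^ s * ‖u k‖ ^ 2) →
      Summable (fun k : Fin n → ℤ => (1 + ∑ j, ((k j : ℝ)) ^ 2) ^ t * ‖v k‖ ^ 2) →
      (∀ k : Fin n → ℤ, Summable fun l : Fin n → ℤ => ‖u l * v (k - l)‖) ∧
      Summable (fun k : Fin n → ℤ =>
        (1 + ∑ j, ((k j : ℝ)) ^ 2) ^ t * ‖∑' l : Fin n → ℤ, u l * v (k - l)‖ ^ 2) ∧
      Real.sqrt (∑' k : Fin n → ℤ,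
          (1 + ∑ j, ((k j : ℝ)) ^ 2) ^ t * ‖∑' l : Fin n → ℤ, u l * v (k - l)‖ ^ 2) ≤
        C * Real.sqrt (∑' k : Fin n → ℤ, (1 + ∑ j, ((k j : ℝ)) ^ 2) ^ s * ‖u k‖ ^ 2) *
          Real.sqrt (∑' k : Fin n → ℤ, (1 + ∑ j, ((k j : ℝ)) ^ 2) ^ t * ‖v k‖ ^ 2) := by
  have hH := summable_sobolevWeight_rpow_neg hs
  have hH_pos : 0 < ∑' k, sobolevWeight k ^ (-s) :=
    hH.tsum_pos (fun k => (Real.rpow_pos_of_pos (sobolevWeight_pos k) _).le) 0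
      (Real.rpow_pos_of_pos (sobolevWeight_pos 0) _)
  refine ⟨√(4 ^ (t + 1) * ∑' k, sobolevWeight k ^ (-s)), by positivity, fun u v hu hv => ?_⟩
  exact weightedL2_conv_bound sobolevWeight_pos sobolevWeight_add_le hH ht hts hu hv
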